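/- Let G be a group, Z a central subgroup of G contained in a finite subgroup Γ of G, and let n = |[G,G] ∩ Z(G)| be finite. Then for any g ∈ Γ, the index [N_Γ(gZ) : C_Γ(g)] is at most n, where N_Γ(gZ) = {h ∈ Γ : h(gZ)h^{-1} = gZ}. -/

import Mathlib

/-- Let `G` be a group, `Z` a central subgroup of `G` contained in a
finite subgroup `Γ` of `G`, and suppose `n = |[G,G] ∩ Z(G)|` is finite.  Then for any
`g ∈ Γ`, the index `[N_Γ(gZ) : C_Γ(g)]` is at most `n`, where
`N_Γ(gZ) = {h ∈ Γ : h (gZ) h⁻¹ = gZ}`; equivalently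
`|N_Γ(gZ)| ≤ n · |C_Γ(g)|`. -/
theorem stmt_6 (G : Type) [Group G] (Γ Z : Subgroup G) [Finite Γ]
    (hZc : Z ≤ Subgroup.center G) (hZΓ : Z ≤ Γ)
    (n : ℕ) (hn : n = Nat.card ↥(commutator G ⊓ Subgroup.center G))
    (hfin : Finite ↥(commutator G ⊓ Subgroup.center G))
    (g : G) (hg : g ∈ Γ) :
    Nat.card {h : G // h ∈ Γ ∧ ∃ z ∈ Z, h * g * h⁻¹ = g * z} ≤
      n * Nat.card {h : G // h ∈ Γ ∧ h * g = g * h} := by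
  classical
  set N := {h : G // h ∈ Γ ∧ ∃ z ∈ Z, h * g * h⁻¹ = g * z} with hN
  set C := {h : G // h ∈ Γ ∧ h * g = g * h} with hC
  set K := ↥(commutator G ⊓ Subgroup.center G) with hK
  haveI : Finite C := Finite.of_injective (fun h => (⟨h.1, h.2.1⟩ : Γ))
    (fun a b hab => by
      simp only [Subtype.mk.injEq] at hab; exact Subtype.ext hab)
  -- The map sending h to the commutator g⁻¹ h g h⁻¹, which lies in commutator ⊓ center.
  have fmem : ∀ h : N, g⁻¹ * h.1 * g * h.1⁻¹ ∈ commutator G ⊓ Subgroup.center G := by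
    rintro ⟨h, hΓ, z, hz, hconj⟩
    constructor
    · open scoped commutatorElement in
      have : g⁻¹ * h * g * h⁻¹ = ⁅g⁻¹, h⁆ := by group
      rw [this, commutator_def]
      exact Subgroup.commutator_mem_commutator (Subgroup.mem_top _) (Subgroup.mem_top _)
    · have : g⁻¹ * h * g * h⁻¹ = z := by
        calc g⁻¹ * h * g * h⁻¹ = g⁻¹ * (h * g * h⁻¹) := by group
          _ = g⁻¹ * (g * z) := by rw [hconj]
          _ = z := by group
      rw [this]; exact hZc hz
  let f : N → K := fun h => ⟨g⁻¹ * h.1 * g * h.1⁻¹, fmem h⟩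
  -- choose a section
  let sec : K → G := fun k => if hk : ∃ h : N, f h = k then (hk.choose.1 : G) else 1
  have key : ∀ h : N, ((sec (f h))⁻¹ * h.1) * g = g * ((sec (f h))⁻¹ * h.1) ∧
      (sec (f h)) ∈ Γ := by
    intro h
    have hk : ∃ h' : N, f h' = f h := ⟨h, rfl⟩
    have hs : sec (f h) = (hk.choose.1 : G) := dif_pos hk
    have heq : g⁻¹ * hk.choose.1 * g * hk.choose.1⁻¹ = g⁻¹ * h.1 * g * h.1⁻¹ :=
      congrArg Subtype.val hk.choose_spec
    constructor
    · rw [hs]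
      have heq2 : h.1 * g * h.1⁻¹ = hk.choose.1 * g * hk.choose.1⁻¹ := by
        calc h.1 * g * h.1⁻¹ = g * (g⁻¹ * h.1 * g * h.1⁻¹) := by group
          _ = g * (g⁻¹ * hk.choose.1 * g * hk.choose.1⁻¹) := by rw [heq]
          _ = hk.choose.1 * g * hk.choose.1⁻¹ := by group
      calc hk.choose.1⁻¹ * h.1 * g = hk.choose.1⁻¹ * (h.1 * g * h.1⁻¹) * h.1 := by group
        _ = hk.choose.1⁻¹ * (hk.choose.1 * g * hk.choose.1⁻¹) * h.1 := by rw [heq2]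
        _ = g * (hk.choose.1⁻¹ * h.1) := by group
    · rw [hs]; exact hk.choose.2.1
  let φ : N → K × C := fun h => ⟨f h, ⟨(sec (f h))⁻¹ * h.1, ⟨Γ.mul_mem (Γ.inv_mem (key h).2) h.2.1, (key h).1⟩⟩⟩
  have hinj : Function.Injective φ := by
    intro a b hab
    have h1 : f a = f b := congrArg Prod.fst hab
    have h2 : (sec (f a))⁻¹ * a.1 = (sec (f b))⁻¹ * b.1 :=
      congrArg Subtype.val (congrArg Prod.snd hab)
    rw [h1] at h2
    exact Subtype.ext (mul_left_cancel h2)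
  calc Nat.card N ≤ Nat.card (K × C) := Nat.card_le_card_of_injective φ hinj
    _ = Nat.card K * Nat.card C := Nat.card_prod _ _
    _ = n * Nat.card C := by rw [hn]
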